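/- arXiv:0802.1198 — 2 statements merged into one kernel-verified Lean document; each statement's English description precedes it below -/
import Mathlib

section
/- Let E be an arbitrary (countable) graph and K a field. Then L_K(E) is semiprime: it has no nonzero two-sided ideal I with I² = 0. -/
set_option synthInstance.maxHeartbeats 1000000
set_option maxHeartbeats 1000000

noncomputable section

/-! ## Generators and relations for the Leavitt path algebra of a graph

A (directed) graph is given by types `V` (vertices, `E^0`) and `Ed` (edges, `E^1`),
both countable, together with source and range maps `s r : Ed → V`. -/

/-- Generators for the Leavitt path algebra: vertices, real edges and ghost edges. -/
inductive LPAGen (V Ed : Type) : Type where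
  | vert : V → LPAGen V Ed
  | edge : Ed → LPAGen V Ed
  | ghost : Ed → LPAGen V Ed

open Classical in
/-- The defining relations of the Leavitt path algebra: the vertices are pairwise
orthogonal idempotents, (1) `s(e)e = e = e r(e)`, (2) `r(e)e* = e* = e* s(e)`,
(3) `e* e' = δ_{e,e'} r(e)`, and (4) `v = ∑_{s(e) = v} e e*` for every regular vertex `v`. -/
inductive LPARel (K : Type) [Field K] {V Ed : Type} (s r : Ed → V) :
    FreeAlgebra K (LPAGen V Ed) → FreeAlgebra K (LPAGen V Ed) → Prop where
  | vert_mul (u v : V) : LPARel K s r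
      (FreeAlgebra.ι K (LPAGen.vert u) * FreeAlgebra.ι K (LPAGen.vert v))
      (if u = v then FreeAlgebra.ι K (LPAGen.vert u) else 0)
  | src_mul_edge (e : Ed) : LPARel K s r
      (FreeAlgebra.ι K (LPAGen.vert (s e)) * FreeAlgebra.ι K (LPAGen.edge e))
      (FreeAlgebra.ι K (LPAGen.edge e))
  | edge_mul_rng (e : Ed) : LPARel K s r
      (FreeAlgebra.ι K (LPAGen.edge e) * FreeAlgebra.ι K (LPAGen.vert (r e)))
      (FreeAlgebra.ι K (LPAGen.edge e))
  | rng_mul_ghost (e : Ed) : LPARel K s r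
      (FreeAlgebra.ι K (LPAGen.vert (r e)) * FreeAlgebra.ι K (LPAGen.ghost e))
      (FreeAlgebra.ι K (LPAGen.ghost e))
  | ghost_mul_src (e : Ed) : LPARel K s r
      (FreeAlgebra.ι K (LPAGen.ghost e) * FreeAlgebra.ι K (LPAGen.vert (s e)))
      (FreeAlgebra.ι K (LPAGen.ghost e))
  | ghost_mul_edge (e f : Ed) : LPARel K s r
      (FreeAlgebra.ι K (LPAGen.ghost e) * FreeAlgebra.ι K (LPAGen.edge f))
      (if e = f then FreeAlgebra.ι K (LPAGen.vert (r e)) else 0)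
  | ck2 (v : V) (h : {e : Ed | s e = v}.Finite) (hne : {e : Ed | s e = v}.Nonempty) :
      LPARel K s r
        (∑ e ∈ h.toFinset,
          FreeAlgebra.ι K (LPAGen.edge e) * FreeAlgebra.ι K (LPAGen.ghost e))
        (FreeAlgebra.ι K (LPAGen.vert v))

variable (K : Type) [Field K] {V Ed : Type} (s r : Ed → V)

/-- The ambient unital algebra: quotient of the free associative algebra on the
generators by the ideal induced by the Leavitt path algebra relations. -/
abbrev LPAamb : Type := RingQuot (LPARel K s r)

/-- The canonical image of a generator in the ambient algebra. -/
def lpaGen (g : LPAGen V Ed) : LPAamb K s r :=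
  RingQuot.mkAlgHom K (LPARel K s r) (FreeAlgebra.ι K g)

/-- The Leavitt path algebra `L_K(E)` of the graph `E = (V, Ed, s, r)`: the (in general
non-unital) subalgebra of the ambient quotient algebra generated by the vertices,
edges and ghost edges. -/
def LeavittPathAlgebra : NonUnitalSubalgebra K (LPAamb K s r) :=
  NonUnitalAlgebra.adjoin K (Set.range (lpaGen K s r))

namespace LPA

/-- A vertex, as an element of the Leavitt path algebra. -/
def vertex (v : V) : LeavittPathAlgebra K s r :=
  ⟨lpaGen K s r (LPAGen.vert v), NonUnitalAlgebra.subset_adjoin K ⟨_, rfl⟩⟩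

/-- A (real) edge, as an element of the Leavitt path algebra. -/
def edge (e : Ed) : LeavittPathAlgebra K s r :=
  ⟨lpaGen K s r (LPAGen.edge e), NonUnitalAlgebra.subset_adjoin K ⟨_, rfl⟩⟩

/-- A ghost edge `e*`, as an element of the Leavitt path algebra. -/
def ghost (e : Ed) : LeavittPathAlgebra K s r :=
  ⟨lpaGen K s r (LPAGen.ghost e), NonUnitalAlgebra.subset_adjoin K ⟨_, rfl⟩⟩

/-- The set of elements of the Leavitt path algebra of the form `v`, `e` or `e*`
(i.e. the set `E^0 ∪ E^1 ∪ (E^1)^*`). -/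
def genSet : Set (LeavittPathAlgebra K s r) :=
  {x | ∃ g : LPAGen V Ed, (x : LPAamb K s r) = lpaGen K s r g}

end LPA

/-! ## Graph-theoretic notions -/

section GraphNotions

/-- `Reaches s r u w` : there is a (possibly trivial) path from `u` to `w`,
that is, `w ∈ T(u)`, the tree of `u`. -/
def Reaches (u w : V) : Prop :=
  Relation.ReflTransGen (fun a b => ∃ e : Ed, s e = a ∧ r e = b) u w

/-- A vertex `v` is a bifurcation if it emits at least two distinct edges. -/
def IsBifurcation (v : V) : Prop := ∃ e f : Ed, e ≠ f ∧ s e = v ∧ s f = v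

/-- `v` is a regular vertex: neither a sink nor an infinite emitter. -/
def IsRegularVertex (v : V) : Prop :=
  {e : Ed | s e = v}.Finite ∧ {e : Ed | s e = v}.Nonempty

/-- A nonempty list of edges is a closed path based at `v` if consecutive edges are
composable, its source is `v` and its range is `v`. -/
structure IsClosedPath (es : List Ed) (v : V) : Prop where
  ne : es ≠ []
  chain : es.Chain' fun e f => r e = s f
  src : s (es.head ne) = v
  rng : r (es.getLast ne) = v

/-- A cycle based at `v` : a closed path based at `v` whose edges have pairwise
distinct sources. -/
structure IsCycle (es : List Ed) (v : V) extends IsClosedPath s r es v : Prop where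
  nodup : (es.map s).Nodup

/-- A path (list of edges) has an exit if some edge `g` shares its source with some
edge of the path but is distinct from it. -/
def HasExit (es : List Ed) : Prop := ∃ g : Ed, ∃ e ∈ es, s g = s e ∧ g ≠ e

/-- Condition (L): every cycle has an exit. -/
def ConditionL : Prop := ∀ (es : List Ed) (v : V), IsCycle s r es v → HasExit s es

/-- A line point: no vertex of the tree `T(u)` is a bifurcation or the base of a cycle. -/
def IsLinePoint (u : V) : Prop :=
  ∀ w : V, Reaches s r u w →
    ¬ IsBifurcation s w ∧ ∀ es : List Ed, ¬ IsCycle s r es w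

/-- A set `H` of vertices is hereditary if it is closed under ranges of paths. -/
def IsHereditary (H : Set V) : Prop := ∀ v ∈ H, ∀ w : V, Reaches s r v w → w ∈ H

/-- A set `H` of vertices is saturated if every regular vertex all of whose emitted
edges have range in `H` belongs to `H`. -/
def IsSaturated (H : Set V) : Prop :=
  ∀ v : V, IsRegularVertex s v → (∀ e : Ed, s e = v → r e ∈ H) → v ∈ H

end GraphNotions

/-! ## Ring-theoretic notions for (possibly non-unital) rings -/

section RingNotions

variable {R : Type} [NonUnitalNonAssocRing R]

/-- A left ideal of a (possibly non-unital) ring: an additive subgroup closed under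
left multiplication by arbitrary ring elements. -/
def IsLeftIdeal (I : AddSubgroup R) : Prop := ∀ a : R, ∀ x ∈ I, a * x ∈ I

/-- A two-sided ideal of a (possibly non-unital) ring. -/
def IsTwoSidedIdealSG (I : AddSubgroup R) : Prop :=
  ∀ a : R, ∀ x ∈ I, a * x ∈ I ∧ x * a ∈ I

/-- A minimal left ideal: a nonzero left ideal properly containing no nonzero
left ideal. -/
def IsMinimalLeftIdeal (I : AddSubgroup R) : Prop :=
  IsLeftIdeal I ∧ I ≠ ⊥ ∧ ∀ J : AddSubgroup R, IsLeftIdeal J → J < I → J = ⊥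

/-- The socle of a ring: the sum of all its minimal left ideals (the zero ideal if
there are none). -/
def rsocle (R : Type) [NonUnitalNonAssocRing R] : AddSubgroup R :=
  sSup {I : AddSubgroup R | IsMinimalLeftIdeal I}

/-- The two-sided ideal generated by a subset of a ring. -/
def idealGenBy (S : Set R) : AddSubgroup R :=
  sInf {I : AddSubgroup R | S ⊆ ↑I ∧ IsTwoSidedIdealSG I}

/-- A ring is semiprime if it has no nonzero two-sided ideal with zero square. -/
def IsSemiprimeRing (R : Type) [NonUnitalNonAssocRing R] : Prop :=
  ∀ I : AddSubgroup R, IsTwoSidedIdealSG I → (∀ x ∈ I, ∀ y ∈ I, x * y = 0) → I = ⊥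

/-- An idempotent ring: `R² = R`, i.e. every element is a sum of products. -/
def IsIdempotentRing (R : Type) [NonUnitalNonAssocRing R] : Prop :=
  ∀ x : R, x ∈ AddSubgroup.closure {y : R | ∃ a b : R, y = a * b}

/-- The principal left ideal `R·a = {x * a : x ∈ R}`. -/
def principalLeft (a : R) : AddSubgroup R where
  carrier := Set.range fun x : R => x * a
  add_mem' := by rintro _ _ ⟨x, rfl⟩ ⟨y, rfl⟩; exact ⟨x + y, add_mul x y a⟩
  zero_mem' := ⟨0, zero_mul a⟩
  neg_mem' := by rintro _ ⟨x, rfl⟩; exact ⟨-x, neg_mul x a⟩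

theorem principalLeft.mul_mem {R : Type} [NonUnitalRing R] (a b : R) {x : R}
    (hx : x ∈ principalLeft a) : b * x ∈ principalLeft a := by
  obtain ⟨y, rfl⟩ := hx
  exact ⟨b * y, by simp only []; rw [mul_assoc]⟩

end RingNotions

/-!
`L_K(E)` is even nondegenerate: an element `b ∈ L_K(E)` with `b L_K(E) b = 0` vanishes. This
suffices, since every `a` in an ideal `I` with `I² = 0` satisfies `a L_K(E) a ⊆ I · I = 0`.

`L_K(E)` is spanned by the monomials `α v β*` (`α`, `β` paths ending at `v`) and `ℤ`-graded by
`|α| - |β|`. The top homogeneous component of such a `b` inherits `b L_K(E) b = 0`, so `b` may be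
taken homogeneous of some degree `n`. If `n < 0`, every monomial of `b` ends in a ghost edge, so
`b = ∑_f (b f) f*` with each `b f` of degree `n + 1` (dually for `n > 0`); this reduces to
degree `0`. There, with `P = ∑_{e ∈ F} e e*` over the edges `F` of the monomials of `b`, the
element `b - P b P` is a combination of the orthogonal idempotents `q_v = v (1 - P)`, while
`P b P = ∑_{e,f} e (e* b f) f*` vanishes by induction on the length of the monomials. Finally
`q_v b q_v = c_v q_v` squares to `q_v (b q_v b) q_v = 0`, so `c_v² q_v = 0` and `b = 0`. No
linear independence of monomials is ever needed.
-/

section GeneralAlgebra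

def IsAbsZeroDivisor {A S : Type*} [Mul A] [Zero A] [SetLike S A] (L : S) (b : A) : Prop :=
  ∀ x ∈ L, b * x * b = 0

namespace IsAbsZeroDivisor

variable {A S : Type*} [NonUnitalSemiring A] [SetLike S A] [MulMemClass S A] {L : S} {b : A}

theorem mul_left (h : IsAbsZeroDivisor L b) {u : A} (hu : u ∈ L) :
    IsAbsZeroDivisor L (u * b) := fun x hx => by
  rw [show u * b * x * (u * b) = u * (b * (x * u) * b) by simp only [mul_assoc],
    h _ (mul_mem hx hu), mul_zero]

theorem mul_right (h : IsAbsZeroDivisor L b) {w : A} (hw : w ∈ L) :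
    IsAbsZeroDivisor L (b * w) := fun x hx => by
  rw [show b * w * x * (b * w) = b * (w * x) * b * w by simp only [mul_assoc],
    h _ (mul_mem hw hx), zero_mul]

end IsAbsZeroDivisor

theorem IsSemiprimeRing.of_forall_mul_mul_eq_zero {R : Type} [NonUnitalNonAssocRing R]
    (h : ∀ a : R, (∀ x, a * x * a = 0) → a = 0) : IsSemiprimeRing R := by
  intro I hI hsq
  refine (AddSubgroup.eq_bot_iff_forall I).2 fun a ha => h a fun x => ?_
  exact hsq _ (hI x a ha).2 a ha

theorem OrthogonalIdempotents.mul_of_commute {R I : Type*} [Semiring R] {e : I → R}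
    (he : OrthogonalIdempotents e) {p : R} (hp : IsIdempotentElem p)
    (hc : ∀ i, Commute (e i) p) : OrthogonalIdempotents fun i => e i * p := by
  have hmul : ∀ i j, e i * p * (e j * p) = e i * e j * p := fun i j => by
    rw [mul_assoc, ← mul_assoc p, ← (hc j).eq, mul_assoc, hp.eq, mul_assoc]
  exact ⟨fun i => by rw [IsIdempotentElem, hmul, (he.idem i).eq],
    fun i j hij => by simp only [hmul, he.ortho hij, zero_mul]⟩

/-- The square of `b q b = 0` inside `q b q = c q` forces `c² q = 0`. -/
theorem OrthogonalIdempotents.eq_zero_of_mem_span {K A I : Type*} [Field K] [Ring A]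
    [Algebra K A] {q : I → A} (hq : OrthogonalIdempotents q) {b : A}
    (hb : b ∈ Submodule.span K (Set.range q)) (hbqb : ∀ i, b * q i * b = 0) : b = 0 := by
  classical
  obtain ⟨c, rfl⟩ := Finsupp.mem_span_range_iff_exists_finsupp.1 hb
  refine Finset.sum_eq_zero fun i _ => ?_
  set b := c.sum fun j a => a • q j
  have hqbq : q i * b * q i = c i • q i := by
    simp only [b, Finsupp.sum, Finset.mul_sum, Finset.sum_mul, mul_smul_comm, smul_mul_assoc,
      hq.mul_eq, ite_mul, zero_mul, smul_ite, smul_zero]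
    split_ifs with h <;> simp_all
  have hsq : (c i * c i) • q i = 0 := by
    calc (c i * c i) • q i = q i * b * q i * (q i * b * q i) := by
          rw [hqbq, smul_mul_smul_comm, (hq.idem i).eq]
      _ = q i * (b * (q i * q i) * b) * q i := by simp only [mul_assoc]
      _ = 0 := by rw [(hq.idem i).eq, hbqb, mul_zero, zero_mul]
  rcases smul_eq_zero.1 hsq with h | h
  · simp [mul_self_eq_zero.1 h]
  · simp [h]

theorem AddMonoidAlgebra.coeff_mul_add_of_forall_le {R A : Type*} [Semiring R]
    [AddCommMonoid A] [LinearOrder A] [IsOrderedCancelAddMonoid A] {f g : AddMonoidAlgebra R A}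
    {a b : A} (hf : ∀ x ∈ f.coeff.support, x ≤ a) (hg : ∀ y ∈ g.coeff.support, y ≤ b) :
    (f * g).coeff (a + b) = f.coeff a * g.coeff b := by
  refine AddMonoidAlgebra.coeff_mul_add_of_uniqueAdd fun x y hx hy hxy => ?_
  obtain hxa | rfl := (hf x hx).lt_or_eq
  · exact absurd hxy (add_lt_add_of_lt_of_le hxa (hg y hy)).ne
  · exact ⟨rfl, add_left_cancel hxy⟩

theorem AddMonoidAlgebra.le_of_mem_support_mul {R A : Type*} [Semiring R]
    [AddCommMonoid A] [LinearOrder A] [IsOrderedCancelAddMonoid A] {f g : AddMonoidAlgebra R A}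
    {a b : A} (hf : ∀ x ∈ f.coeff.support, x ≤ a) (hg : ∀ y ∈ g.coeff.support, y ≤ b) :
    ∀ z ∈ (f * g).coeff.support, z ≤ a + b := by
  intro z hz
  obtain ⟨x, hx, y, hy, rfl⟩ :=
    Finset.mem_add.1 (AddMonoidAlgebra.support_coeff_mul_subset f g hz)
  exact add_le_add (hf x hx) (hg y hy)

theorem Submodule.exists_finset_of_mem_span_image {R M ι : Type*} [Semiring R]
    [AddCommMonoid M] [Module R M] {f : ι → M} {S : Set ι} {x : M}
    (hx : x ∈ Submodule.span R (f '' S)) :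
    ∃ T : Finset ι, ↑T ⊆ S ∧ x ∈ Submodule.span R (f '' T) := by
  obtain ⟨l, hl, rfl⟩ := (Finsupp.mem_span_image_iff_linearCombination R).1 hx
  exact ⟨l.support, hl, (Finsupp.mem_span_image_iff_linearCombination R).2
    ⟨l, (Finsupp.mem_supported R l).2 subset_rfl, rfl⟩⟩

end GeneralAlgebra

open scoped Classical

namespace LPA

/-- `⟨α, v, β⟩` stands for the monomial `α v β*`, see `mon`. -/
structure Monomial (V Ed : Type) where
  left : List Ed
  vtx : V
  right : List Ed

/-- The source of a path `α` ending at `v` (`v` itself if `α = []`). -/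
def pathSrc : List Ed → V → V
  | [], v => v
  | e :: _, _ => s e

def IsPathTo : List Ed → V → Prop
  | [], _ => True
  | e :: α, v => r e = pathSrc s α v ∧ IsPathTo α v

variable {s r} in
theorem IsPathTo.append_singleton {β : List Ed} {v : V} (hβ : IsPathTo s r β v) {g : Ed}
    (hg : s g = v) : IsPathTo s r (β ++ [g]) (r g) := by
  induction β with
  | nil => exact ⟨rfl, trivial⟩
  | cons h β ih =>
    refine ⟨?_, ih hβ.2⟩
    cases β <;> simp_all [IsPathTo, pathSrc]

namespace Monomial

def IsPath (m : Monomial V Ed) : Prop := IsPathTo s r m.left m.vtx ∧ IsPathTo s r m.right m.vtx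

def degree (m : Monomial V Ed) : ℤ := m.left.length - m.right.length

end Monomial

variable {K s r}

/- The generators as elements of the unital ambient algebra, where all computations happen. -/

def vertA (v : V) : LPAamb K s r := lpaGen K s r (.vert v)

def edgeA (e : Ed) : LPAamb K s r := lpaGen K s r (.edge e)

def ghostA (e : Ed) : LPAamb K s r := lpaGen K s r (.ghost e)

theorem vertA_mem (v : V) : vertA v ∈ LeavittPathAlgebra K s r :=
  NonUnitalAlgebra.subset_adjoin K ⟨_, rfl⟩

theorem edgeA_mem (e : Ed) : edgeA e ∈ LeavittPathAlgebra K s r :=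
  NonUnitalAlgebra.subset_adjoin K ⟨_, rfl⟩

theorem ghostA_mem (e : Ed) : ghostA e ∈ LeavittPathAlgebra K s r :=
  NonUnitalAlgebra.subset_adjoin K ⟨_, rfl⟩

section Relations

theorem vertA_mul_vertA (u v : V) :
    (vertA u * vertA v : LPAamb K s r) = if u = v then vertA u else 0 := by
  simpa [vertA, edgeA, ghostA, lpaGen, apply_ite] using
    RingQuot.mkAlgHom_rel K (LPARel.vert_mul (K := K) (s := s) (r := r) u v)

theorem vertA_src_mul_edgeA (e : Ed) : (vertA (s e) * edgeA e : LPAamb K s r) = edgeA e := by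
  simpa [vertA, edgeA, ghostA, lpaGen] using
    RingQuot.mkAlgHom_rel K (LPARel.src_mul_edge (K := K) (s := s) (r := r) e)

theorem edgeA_mul_vertA_rng (e : Ed) : (edgeA e * vertA (r e) : LPAamb K s r) = edgeA e := by
  simpa [vertA, edgeA, ghostA, lpaGen] using
    RingQuot.mkAlgHom_rel K (LPARel.edge_mul_rng (K := K) (s := s) (r := r) e)

theorem vertA_rng_mul_ghostA (e : Ed) : (vertA (r e) * ghostA e : LPAamb K s r) = ghostA e := by
  simpa [vertA, edgeA, ghostA, lpaGen] using
    RingQuot.mkAlgHom_rel K (LPARel.rng_mul_ghost (K := K) (s := s) (r := r) e)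

theorem ghostA_mul_vertA_src (e : Ed) : (ghostA e * vertA (s e) : LPAamb K s r) = ghostA e := by
  simpa [vertA, edgeA, ghostA, lpaGen] using
    RingQuot.mkAlgHom_rel K (LPARel.ghost_mul_src (K := K) (s := s) (r := r) e)

theorem ghostA_mul_edgeA (e f : Ed) :
    (ghostA e * edgeA f : LPAamb K s r) = if e = f then vertA (r e) else 0 := by
  simpa [vertA, edgeA, ghostA, lpaGen, apply_ite] using
    RingQuot.mkAlgHom_rel K (LPARel.ghost_mul_edge (K := K) (s := s) (r := r) e f)

theorem sum_edgeA_mul_ghostA (v : V) (h : {e : Ed | s e = v}.Finite)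
    (hne : {e : Ed | s e = v}.Nonempty) :
    ∑ e ∈ h.toFinset, (edgeA e * ghostA e : LPAamb K s r) = vertA v := by
  simpa [vertA, edgeA, ghostA, lpaGen] using
    RingQuot.mkAlgHom_rel K (LPARel.ck2 (K := K) (s := s) (r := r) v h hne)

theorem vertA_mul_edgeA (u : V) (e : Ed) :
    (vertA u * edgeA e : LPAamb K s r) = if u = s e then edgeA e else 0 := by
  split_ifs with h
  · rw [h, vertA_src_mul_edgeA]
  · rw [← vertA_src_mul_edgeA, ← mul_assoc, vertA_mul_vertA, if_neg h, zero_mul]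

theorem ghostA_mul_vertA (e : Ed) (u : V) :
    (ghostA e * vertA u : LPAamb K s r) = if u = s e then ghostA e else 0 := by
  split_ifs with h
  · rw [h, ghostA_mul_vertA_src]
  · rw [← ghostA_mul_vertA_src, mul_assoc, vertA_mul_vertA, if_neg (Ne.symm h), mul_zero]

end Relations

section Monomials

def mon (m : Monomial V Ed) : LPAamb K s r :=
  (m.left.map edgeA).prod * vertA m.vtx * (m.right.map ghostA).reverse.prod

theorem mon_cons_left (a : Ed) (α : List Ed) (v : V) (β : List Ed) :
    (mon ⟨a :: α, v, β⟩ : LPAamb K s r) = edgeA a * mon ⟨α, v, β⟩ := by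
  simp [mon, mul_assoc]

theorem mon_cons_right (α : List Ed) (v : V) (h : Ed) (β : List Ed) :
    (mon ⟨α, v, h :: β⟩ : LPAamb K s r) = mon ⟨α, v, β⟩ * ghostA h := by
  simp [mon, mul_assoc]

theorem mon_nil_nil (v : V) : (mon ⟨[], v, []⟩ : LPAamb K s r) = vertA v := by
  simp [mon]

theorem mon_edge (e : Ed) : (mon ⟨[e], r e, []⟩ : LPAamb K s r) = edgeA e := by
  simp [mon, edgeA_mul_vertA_rng]

theorem mon_ghost (e : Ed) : (mon ⟨[], r e, [e]⟩ : LPAamb K s r) = ghostA e := by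
  simp [mon, vertA_rng_mul_ghostA]

theorem vertA_mul_mon (u : V) (m : Monomial V Ed) :
    (vertA u * mon m : LPAamb K s r) = if u = pathSrc s m.left m.vtx then mon m else 0 := by
  obtain ⟨_ | ⟨e, α⟩, v, β⟩ := m
  · simp only [mon, List.map_nil, List.prod_nil, one_mul, pathSrc]
    rw [← mul_assoc, vertA_mul_vertA]
    split_ifs with h <;> simp [h]
  · rw [mon_cons_left, ← mul_assoc, vertA_mul_edgeA]
    by_cases hu : u = s e <;> simp [hu, pathSrc]

theorem mon_mul_vertA (m : Monomial V Ed) (u : V) :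
    (mon m * vertA u : LPAamb K s r) = if u = pathSrc s m.right m.vtx then mon m else 0 := by
  obtain ⟨α, v, _ | ⟨h, β⟩⟩ := m
  · simp only [mon, List.map_nil, List.reverse_nil, List.prod_nil, mul_one, pathSrc]
    rw [mul_assoc, vertA_mul_vertA]
    split_ifs with h h' h' <;> simp_all
  · rw [mon_cons_right, mul_assoc, ghostA_mul_vertA]
    by_cases hu : u = s h <;> simp [hu, pathSrc]

theorem edgeA_mul_mon (g : Ed) (m : Monomial V Ed) :
    (edgeA g * mon m : LPAamb K s r) =
      if r g = pathSrc s m.left m.vtx then mon ⟨g :: m.left, m.vtx, m.right⟩ else 0 := by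
  rw [← edgeA_mul_vertA_rng g, mul_assoc, vertA_mul_mon]
  split_ifs <;> simp [mon_cons_left]

theorem ghostA_mul_mon_nil (g : Ed) (v : V) (β : List Ed) :
    (ghostA g * mon ⟨[], v, β⟩ : LPAamb K s r) =
      if s g = v then mon ⟨[], r g, β ++ [g]⟩ else 0 := by
  by_cases h : s g = v
  · subst h
    simp [mon, ← mul_assoc, ghostA_mul_vertA_src, vertA_rng_mul_ghostA]
  · simp [mon, ← mul_assoc, ghostA_mul_vertA, Ne.symm h, h]

theorem ghostA_mul_mon_cons {a : Ed} {α : List Ed} {v : V} (hp : IsPathTo s r (a :: α) v)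
    (g : Ed) (β : List Ed) :
    (ghostA g * mon ⟨a :: α, v, β⟩ : LPAamb K s r) =
      if g = a then mon ⟨α, v, β⟩ else 0 := by
  rw [mon_cons_left, ← mul_assoc, ghostA_mul_edgeA]
  split_ifs with h
  · rw [h, vertA_mul_mon, if_pos hp.1]
  · rw [zero_mul]

theorem mon_cons_mul_edgeA {h : Ed} {β : List Ed} {v : V} (hp : IsPathTo s r (h :: β) v)
    (α : List Ed) (f : Ed) :
    (mon ⟨α, v, h :: β⟩ * edgeA f : LPAamb K s r) =
      if h = f then mon ⟨α, v, β⟩ else 0 := by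
  rw [mon_cons_right, mul_assoc, ghostA_mul_edgeA]
  split_ifs with hf
  · rw [mon_mul_vertA, if_pos hp.1]
  · rw [mul_zero]

theorem mon_mem (m : Monomial V Ed) : (mon m : LPAamb K s r) ∈ LeavittPathAlgebra K s r := by
  obtain ⟨α, v, β⟩ := m
  induction α with
  | nil =>
    induction β with
    | nil => simpa [mon_nil_nil] using vertA_mem v
    | cons h β ih => rw [mon_cons_right]; exact mul_mem ih (ghostA_mem h)
  | cons a α ih => rw [mon_cons_left]; exact mul_mem (edgeA_mem a) ih

end Monomials

section Spans

variable (K s r) in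
def monomialSpan (P : Monomial V Ed → Prop) : Submodule K (LPAamb K s r) :=
  Submodule.span K (mon '' {m | m.IsPath s r ∧ P m})

theorem mon_mem_monomialSpan {P : Monomial V Ed → Prop} {m : Monomial V Ed}
    (hm : m.IsPath s r) (hP : P m) : mon m ∈ monomialSpan K s r P :=
  Submodule.subset_span ⟨m, ⟨hm, hP⟩, rfl⟩

theorem ite_mem_monomialSpan {P : Monomial V Ed → Prop} {c : Prop} [Decidable c]
    {m : Monomial V Ed} (h : c → m.IsPath s r ∧ P m) :
    (if c then mon m else 0) ∈ monomialSpan K s r P := by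
  split_ifs with hc
  exacts [mon_mem_monomialSpan (h hc).1 (h hc).2, zero_mem _]

theorem mem_of_mem_monomialSpan {P : Monomial V Ed → Prop} {x : LPAamb K s r}
    (hx : x ∈ monomialSpan K s r P) : x ∈ LeavittPathAlgebra K s r := by
  have : monomialSpan K s r P ≤ (LeavittPathAlgebra K s r).toSubmodule :=
    Submodule.span_le.2 (by rintro _ ⟨m, -, rfl⟩; exact mon_mem m)
  exact this hx

theorem lpaGen_mul_mem_monomialSpan (g : LPAGen V Ed) {y : LPAamb K s r}
    (hy : y ∈ monomialSpan K s r ⊤) : lpaGen K s r g * y ∈ monomialSpan K s r ⊤ := by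
  induction hy using Submodule.span_induction with
  | zero => rw [mul_zero]; exact zero_mem _
  | add x y _ _ hx hy => rw [mul_add]; exact add_mem hx hy
  | smul c x _ hx => rw [mul_smul_comm]; exact Submodule.smul_mem _ c hx
  | mem x hx =>
    obtain ⟨⟨α, v, β⟩, ⟨⟨hα, hβ⟩, -⟩, rfl⟩ := hx
    cases g with
    | vert u =>
      show vertA u * mon _ ∈ _
      rw [vertA_mul_mon]
      exact ite_mem_monomialSpan fun _ => ⟨⟨hα, hβ⟩, trivial⟩
    | edge e =>
      show edgeA e * mon _ ∈ _
      rw [edgeA_mul_mon]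
      exact ite_mem_monomialSpan fun h => ⟨⟨⟨h, hα⟩, hβ⟩, trivial⟩
    | ghost e =>
      show ghostA e * mon _ ∈ _
      cases α with
      | nil =>
        rw [ghostA_mul_mon_nil]
        exact ite_mem_monomialSpan fun h => ⟨⟨trivial, hβ.append_singleton h⟩, trivial⟩
      | cons a α =>
        rw [ghostA_mul_mon_cons hα]
        exact ite_mem_monomialSpan fun _ => ⟨⟨hα.2, hβ⟩, trivial⟩

theorem mul_mem_monomialSpan {x y : LPAamb K s r} (hx : x ∈ LeavittPathAlgebra K s r)
    (hy : y ∈ monomialSpan K s r ⊤) : x * y ∈ monomialSpan K s r ⊤ := by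
  induction hx using NonUnitalAlgebra.adjoin_induction generalizing y with
  | mem x hx => obtain ⟨g, rfl⟩ := hx; exact lpaGen_mul_mem_monomialSpan g hy
  | add x z _ _ hx hz => rw [add_mul]; exact add_mem (hx hy) (hz hy)
  | zero => rw [zero_mul]; exact zero_mem _
  | mul x z _ _ hx hz => rw [mul_assoc]; exact hx (hz hy)
  | smul c x _ hx => rw [smul_mul_assoc]; exact Submodule.smul_mem _ c (hx hy)

theorem mem_monomialSpan_of_mem {x : LPAamb K s r} (hx : x ∈ LeavittPathAlgebra K s r) :
    x ∈ monomialSpan K s r ⊤ := by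
  induction hx using NonUnitalAlgebra.adjoin_induction with
  | mem x hx =>
    obtain ⟨g | e | e, rfl⟩ := hx
    · show vertA g ∈ _
      exact mon_nil_nil (K := K) (r := r) g ▸ mon_mem_monomialSpan ⟨trivial, trivial⟩ trivial
    · show edgeA e ∈ _
      exact mon_edge (K := K) e ▸ mon_mem_monomialSpan ⟨⟨rfl, trivial⟩, trivial⟩ trivial
    · show ghostA e ∈ _
      exact mon_ghost (K := K) e ▸ mon_mem_monomialSpan ⟨trivial, ⟨rfl, trivial⟩⟩ trivial
  | add x y _ _ hx hy => exact add_mem hx hy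
  | zero => exact zero_mem _
  | mul x y hx _ _ hy => exact mul_mem_monomialSpan hx hy
  | smul c x _ hx => exact Submodule.smul_mem _ c hx

end Spans

section Grading

open AddMonoidAlgebra

def genDegree : LPAGen V Ed → ℤ
  | .vert _ => 0
  | .edge _ => 1
  | .ghost _ => -1

variable (K s r) in
def gradingFree : FreeAlgebra K (LPAGen V Ed) →ₐ[K] AddMonoidAlgebra (LPAamb K s r) ℤ :=
  FreeAlgebra.lift K fun g => single (genDegree g) (lpaGen K s r g)

theorem gradingFree_rel {x y : FreeAlgebra K (LPAGen V Ed)} (h : LPARel K s r x y) :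
    gradingFree K s r x = gradingFree K s r y := by
  have hι : ∀ g,
      gradingFree K s r (FreeAlgebra.ι K g) = single (genDegree g) (lpaGen K s r g) :=
    fun g => FreeAlgebra.lift_ι_apply _ _
  have hv : ∀ v, lpaGen K s r (.vert v) = vertA v := fun _ => rfl
  have he : ∀ e, lpaGen K s r (.edge e) = edgeA e := fun _ => rfl
  have hg : ∀ e, lpaGen K s r (.ghost e) = ghostA e := fun _ => rfl
  induction h with
  | vert_mul u v =>
    rw [map_mul, hι, hι, apply_ite (gradingFree K s r), hι, map_zero, single_mul_single]
    simp only [genDegree, add_zero, hv, vertA_mul_vertA]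
    split_ifs <;> simp
  | src_mul_edge e =>
    rw [map_mul, hι, hι, single_mul_single]
    simp only [genDegree, zero_add, hv, he, vertA_src_mul_edgeA]
  | edge_mul_rng e =>
    rw [map_mul, hι, hι, single_mul_single]
    simp only [genDegree, add_zero, hv, he, edgeA_mul_vertA_rng]
  | rng_mul_ghost e =>
    rw [map_mul, hι, hι, single_mul_single]
    simp only [genDegree, zero_add, hv, hg, vertA_rng_mul_ghostA]
  | ghost_mul_src e =>
    rw [map_mul, hι, hι, single_mul_single]
    simp only [genDegree, add_zero, hv, hg, ghostA_mul_vertA_src]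
  | ghost_mul_edge e f =>
    rw [map_mul, hι, hι, apply_ite (gradingFree K s r), hι, map_zero, single_mul_single]
    simp only [genDegree, neg_add_cancel, hv, he, hg, ghostA_mul_edgeA]
    split_ifs <;> simp
  | ck2 v hfin hne =>
    simp only [map_sum, map_mul, hι, single_mul_single, genDegree, add_neg_cancel, he, hg, hv]
    rw [← sum_edgeA_mul_ghostA v hfin hne]
    exact (map_sum (singleAddHom (0 : ℤ)) _ _).symm

variable (K s r) in
/-- The `ℤ`-grading of `L_K(E)` (`deg v = 0`, `deg e = 1`, `deg e* = -1`) as the algebra map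
`x ↦ ∑ₙ xₙ Tⁿ` sending `x` to its homogeneous components. -/
def grading : LPAamb K s r →ₐ[K] AddMonoidAlgebra (LPAamb K s r) ℤ :=
  RingQuot.liftAlgHom K ⟨gradingFree K s r, fun _ _ h => gradingFree_rel h⟩

theorem grading_lpaGen (g : LPAGen V Ed) :
    grading K s r (lpaGen K s r g) = single (genDegree g) (lpaGen K s r g) := by
  rw [lpaGen, grading, RingQuot.liftAlgHom_mkAlgHom_apply]
  exact FreeAlgebra.lift_ι_apply _ _

theorem grading_mon (m : Monomial V Ed) :
    grading K s r (mon m) = single m.degree (mon m) := by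
  obtain ⟨α, v, β⟩ := m
  induction α with
  | nil =>
    induction β with
    | nil => rw [mon_nil_nil]; exact grading_lpaGen (.vert v)
    | cons h β ih =>
      rw [mon_cons_right, map_mul, ih, show ghostA h = lpaGen K s r (.ghost h) from rfl,
        grading_lpaGen, single_mul_single]
      congr 1
      simp [Monomial.degree, genDegree]
      ring
  | cons a α ih =>
    rw [mon_cons_left, map_mul, ih, show edgeA a = lpaGen K s r (.edge a) from rfl,
      grading_lpaGen, single_mul_single]
    congr 1
    simp [Monomial.degree, genDegree]
    ring

variable (K s r) in
def counit : AddMonoidAlgebra (LPAamb K s r) ℤ →ₐ[K] LPAamb K s r :=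
  liftNCAlgHom (AlgHom.id K _) 1 fun _ _ => Commute.one_right _

theorem counit_single (n : ℤ) (x : LPAamb K s r) : counit K s r (single n x) = x := by
  rw [counit, coe_liftNCAlgHom, liftNC_single]
  simp

theorem counit_grading (x : LPAamb K s r) : counit K s r (grading K s r x) = x := by
  suffices (counit K s r).comp (grading K s r) = AlgHom.id K _ from congrArg (· x) this
  refine RingQuot.ringQuot_ext' K _ _ (FreeAlgebra.hom_ext (funext fun g => ?_))
  exact (congrArg (counit K s r) (grading_lpaGen g)).trans (counit_single _ _)

theorem eq_sum_coeff_grading (x : LPAamb K s r) :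
    x = ∑ n ∈ (grading K s r x).coeff.support, (grading K s r x).coeff n := by
  conv_lhs => rw [← counit_grading x, ← sum_coeff_single (grading K s r x)]
  rw [Finsupp.sum, map_sum]
  exact Finset.sum_congr rfl fun n _ => counit_single n _

variable (K s r) in
abbrev grade (n : ℤ) : Submodule K (LPAamb K s r) := monomialSpan K s r fun m => m.degree = n

theorem coeff_grading_mem_grade (n : ℤ) {x : LPAamb K s r}
    (hx : x ∈ LeavittPathAlgebra K s r) : (grading K s r x).coeff n ∈ grade K s r n := by
  replace hx := mem_monomialSpan_of_mem hx
  induction hx using Submodule.span_induction with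
  | zero => simp
  | add x y _ _ hx hy => rw [map_add, coeff_add, Finsupp.add_apply]; exact add_mem hx hy
  | smul c x _ hx =>
    rw [map_smul, coeff_smul, Finsupp.smul_apply]; exact Submodule.smul_mem _ c hx
  | mem x hx =>
    obtain ⟨m, ⟨hm, -⟩, rfl⟩ := hx
    rw [grading_mon, coeff_single, Finsupp.single_apply]
    exact ite_mem_monomialSpan fun h => ⟨hm, h⟩

theorem grading_of_mem_grade {n : ℤ} {x : LPAamb K s r} (hx : x ∈ grade K s r n) :
    grading K s r x = single n x := by
  induction hx using Submodule.span_induction with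
  | zero => simp
  | add x y _ _ hx hy => rw [map_add, hx, hy, single_add]
  | smul c x _ hx => rw [map_smul, hx, smul_single]
  | mem x hx =>
    obtain ⟨m, ⟨-, rfl⟩, rfl⟩ := hx
    exact grading_mon m

theorem mul_mem_grade {m n : ℤ} {x y : LPAamb K s r} (hx : x ∈ grade K s r m)
    (hy : y ∈ grade K s r n) : x * y ∈ grade K s r (m + n) := by
  have := coeff_grading_mem_grade (m + n)
    (mul_mem (mem_of_mem_monomialSpan hx) (mem_of_mem_monomialSpan hy))
  rwa [map_mul, grading_of_mem_grade hx, grading_of_mem_grade hy, single_mul_single,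
    coeff_single, Finsupp.single_eq_same] at this

theorem edgeA_mem_grade (e : Ed) : edgeA e ∈ grade K s r 1 :=
  mon_edge (K := K) e ▸ mon_mem_monomialSpan ⟨⟨rfl, trivial⟩, trivial⟩ rfl

theorem ghostA_mem_grade (e : Ed) : ghostA e ∈ grade K s r (-1) :=
  mon_ghost (K := K) e ▸ mon_mem_monomialSpan ⟨trivial, ⟨rfl, trivial⟩⟩ rfl

end Grading

section Projections

def proj (F : Finset Ed) : LPAamb K s r := ∑ e ∈ F, edgeA e * ghostA e

/-- The gap idempotent `v - ∑_{e ∈ F, s(e) = v} e e*`. -/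
def gap (F : Finset Ed) (v : V) : LPAamb K s r := vertA v * (1 - proj F)

theorem proj_mem (F : Finset Ed) : (proj F : LPAamb K s r) ∈ LeavittPathAlgebra K s r :=
  sum_mem fun e _ => mul_mem (edgeA_mem e) (ghostA_mem e)

theorem gap_mem (F : Finset Ed) (v : V) :
    (gap F v : LPAamb K s r) ∈ LeavittPathAlgebra K s r := by
  rw [gap, mul_sub, mul_one]
  exact sub_mem (vertA_mem v) (mul_mem (vertA_mem v) (proj_mem F))

theorem orthogonalIdempotents_vertA : OrthogonalIdempotents (vertA : V → LPAamb K s r) :=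
  OrthogonalIdempotents.iff_mul_eq.2 vertA_mul_vertA

theorem orthogonalIdempotents_edgeA_mul_ghostA :
    OrthogonalIdempotents fun e : Ed => (edgeA e * ghostA e : LPAamb K s r) :=
  OrthogonalIdempotents.iff_mul_eq.2 fun e f => by
    rw [mul_assoc, ← mul_assoc (ghostA e), ghostA_mul_edgeA]
    split_ifs with h
    · rw [h, vertA_rng_mul_ghostA]
    · rw [zero_mul, mul_zero]

theorem isIdempotentElem_proj (F : Finset Ed) : IsIdempotentElem (proj F : LPAamb K s r) :=
  orthogonalIdempotents_edgeA_mul_ghostA.isIdempotentElem_sum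

theorem commute_vertA_proj (v : V) (F : Finset Ed) :
    Commute (vertA v) (proj F : LPAamb K s r) :=
  Commute.sum_right _ _ _ fun e _ => by
    rw [Commute, SemiconjBy, ← mul_assoc, vertA_mul_edgeA, mul_assoc, ghostA_mul_vertA]
    split_ifs <;> simp

theorem orthogonalIdempotents_gap (F : Finset Ed) :
    OrthogonalIdempotents (gap F : V → LPAamb K s r) :=
  orthogonalIdempotents_vertA.mul_of_commute (isIdempotentElem_proj F).one_sub
    fun v => (Commute.one_right _).sub_right (commute_vertA_proj v F)

theorem proj_mul_mon_cons {F : Finset Ed} {a : Ed} (ha : a ∈ F) {α : List Ed} {v : V}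
    (hp : IsPathTo s r (a :: α) v) (β : List Ed) :
    (proj F * mon ⟨a :: α, v, β⟩ : LPAamb K s r) = mon ⟨a :: α, v, β⟩ := by
  rw [proj, Finset.sum_mul]
  simp_rw [mul_assoc, ghostA_mul_mon_cons hp, mul_ite, mul_zero]
  rw [Finset.sum_ite_eq', if_pos ha, mon_cons_left]

theorem mon_cons_mul_proj {F : Finset Ed} {h : Ed} (hh : h ∈ F) {β : List Ed} {v : V}
    (hp : IsPathTo s r (h :: β) v) (α : List Ed) :
    (mon ⟨α, v, h :: β⟩ * proj F : LPAamb K s r) = mon ⟨α, v, h :: β⟩ := by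
  rw [proj, Finset.mul_sum]
  simp_rw [← mul_assoc, mon_cons_mul_edgeA hp, ite_mul, zero_mul]
  rw [Finset.sum_ite_eq, if_pos hh, mon_cons_right]

theorem proj_mul_mul_proj (F : Finset Ed) (x : LPAamb K s r) :
    proj F * x * proj F =
      ∑ e ∈ F, ∑ f ∈ F, edgeA e * (ghostA e * x * edgeA f) * ghostA f := by
  simp only [proj, Finset.sum_mul, Finset.mul_sum, mul_assoc]
  exact Finset.sum_comm

theorem vertA_sub_proj_mul_vertA_mul_proj (F : Finset Ed) (v : V) :
    (vertA v - proj F * vertA v * proj F : LPAamb K s r) = gap F v := by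
  rw [← (commute_vertA_proj v F).eq, mul_assoc, (isIdempotentElem_proj F).eq, gap, mul_sub,
    mul_one]

end Projections

section Nondegenerate

def edges (T : Finset (Monomial V Ed)) : Finset Ed :=
  T.biUnion fun m => (m.left ++ m.right).toFinset

theorem mem_edges_of_mem_left {T : Finset (Monomial V Ed)} {m : Monomial V Ed} (hm : m ∈ T)
    {e : Ed} (he : e ∈ m.left) : e ∈ edges T :=
  Finset.mem_biUnion.2 ⟨m, hm, by simp [he]⟩

theorem mem_edges_of_mem_right {T : Finset (Monomial V Ed)} {m : Monomial V Ed} (hm : m ∈ T)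
    {e : Ed} (he : e ∈ m.right) : e ∈ edges T :=
  Finset.mem_biUnion.2 ⟨m, hm, by simp [he]⟩

variable {T : Finset (Monomial V Ed)} {b : LPAamb K s r}

theorem proj_edges_mul_eq_self (hT : ∀ m ∈ T, m.IsPath s r ∧ m.left ≠ [])
    (hb : b ∈ Submodule.span K (mon '' ↑T)) : proj (edges T) * b = b := by
  refine LinearMap.eqOn_span (f := LinearMap.mulLeft K (proj (edges T))) (g := LinearMap.id)
    ?_ hb
  rintro _ ⟨⟨_ | ⟨a, α⟩, v, β⟩, hm, rfl⟩
  · exact absurd rfl (hT _ hm).2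
  · exact proj_mul_mon_cons (mem_edges_of_mem_left hm List.mem_cons_self) (hT _ hm).1.1 β

theorem mul_proj_edges_eq_self (hT : ∀ m ∈ T, m.IsPath s r ∧ m.right ≠ [])
    (hb : b ∈ Submodule.span K (mon '' ↑T)) : b * proj (edges T) = b := by
  refine LinearMap.eqOn_span (f := LinearMap.mulRight K (proj (edges T))) (g := LinearMap.id)
    ?_ hb
  rintro _ ⟨⟨α, v, _ | ⟨h, β⟩⟩, hm, rfl⟩
  · exact absurd rfl (hT _ hm).2
  · exact mon_cons_mul_proj (mem_edges_of_mem_right hm List.mem_cons_self) (hT _ hm).1.2 α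

theorem sub_proj_mul_mul_proj_mem_span
    (hT : ∀ m ∈ T, m.IsPath s r ∧ m.left.length = m.right.length)
    (hb : b ∈ Submodule.span K (mon '' ↑T)) :
    b - proj (edges T) * b * proj (edges T) ∈ Submodule.span K (Set.range (gap (edges T))) := by
  induction hb using Submodule.span_induction with
  | zero => simp
  | add x y _ _ hx hy =>
    convert add_mem hx hy using 1
    simp only [mul_add, add_mul]
    abel
  | smul c x _ hx =>
    convert Submodule.smul_mem _ c hx using 1
    simp only [mul_smul_comm, smul_mul_assoc, smul_sub]
  | mem x hx =>
    obtain ⟨⟨α, v, β⟩, hm, rfl⟩ := hx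
    obtain ⟨⟨hα, hβ⟩, hlen⟩ := hT _ hm
    match α, β, hlen with
    | [], [], _ =>
      rw [mon_nil_nil, vertA_sub_proj_mul_vertA_mul_proj]
      exact Submodule.subset_span ⟨v, rfl⟩
    | a :: α, h :: β, _ =>
      rw [proj_mul_mon_cons (mem_edges_of_mem_left hm List.mem_cons_self) hα,
        mon_cons_mul_proj (mem_edges_of_mem_right hm List.mem_cons_self) hβ, sub_self]
      exact zero_mem _

/-- The corners give `P b P = 0`, so `b = b - P b P` lies in the span of the orthogonal gap
idempotents, each of which `b` kills. -/
theorem eq_zero_of_corners_eq_zero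
    (hT : ∀ m ∈ T, m.IsPath s r ∧ m.left.length = m.right.length)
    (hb : b ∈ Submodule.span K (mon '' ↑T))
    (hazd : IsAbsZeroDivisor (LeavittPathAlgebra K s r) b)
    (hcorner : ∀ e ∈ edges T, ∀ f ∈ edges T, ghostA e * b * edgeA f = 0) : b = 0 := by
  have hPbP : proj (edges T) * b * proj (edges T) = 0 := by
    rw [proj_mul_mul_proj]
    refine Finset.sum_eq_zero fun e he => Finset.sum_eq_zero fun f hf => ?_
    rw [hcorner e he f hf, mul_zero, zero_mul]
  have hgap := sub_proj_mul_mul_proj_mem_span hT hb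
  rw [hPbP, sub_zero] at hgap
  exact (orthogonalIdempotents_gap _).eq_zero_of_mem_span hgap fun v => hazd _ (gap_mem _ v)

variable (K s r) in
abbrev balancedSpan (N : ℕ) : Submodule K (LPAamb K s r) :=
  monomialSpan K s r fun m => m.left.length = m.right.length ∧ m.left.length ≤ N

theorem ghostA_mul_mul_edgeA_mem_balancedSpan {N : ℕ} (hb : b ∈ balancedSpan K s r (N + 1))
    (e f : Ed) : ghostA e * b * edgeA f ∈ balancedSpan K s r N := by
  induction hb using Submodule.span_induction with
  | zero => simp
  | add x y _ _ hx hy => rw [mul_add, add_mul]; exact add_mem hx hy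
  | smul c x _ hx => rw [mul_smul_comm, smul_mul_assoc]; exact Submodule.smul_mem _ c hx
  | mem x hx =>
    obtain ⟨⟨α, v, β⟩, ⟨⟨hα, hβ⟩, hlen, hN⟩, rfl⟩ := hx
    match α, β, hlen with
    | [], [], _ =>
      rw [mon_nil_nil, ghostA_mul_vertA, ite_mul, zero_mul, ghostA_mul_edgeA, ← mon_nil_nil]
      split_ifs
      exacts [mon_mem_monomialSpan ⟨trivial, trivial⟩ ⟨rfl, Nat.zero_le N⟩, zero_mem _,
        zero_mem _]
    | a :: α, h :: β, hlen =>
      rw [ghostA_mul_mon_cons hα, ite_mul, zero_mul, mon_cons_mul_edgeA hβ]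
      split_ifs
      exacts [mon_mem_monomialSpan ⟨hα.2, hβ.2⟩ ⟨by simpa using hlen, by simpa using hN⟩,
        zero_mem _, zero_mem _]

theorem eq_zero_of_mem_balancedSpan (N : ℕ) (hb : b ∈ balancedSpan K s r N)
    (hazd : IsAbsZeroDivisor (LeavittPathAlgebra K s r) b) : b = 0 := by
  induction N using Nat.strong_induction_on generalizing b with
  | _ N ih =>
    obtain ⟨T, hTS, hbT⟩ := Submodule.exists_finset_of_mem_span_image hb
    refine eq_zero_of_corners_eq_zero (fun m hm => ⟨(hTS hm).1, (hTS hm).2.1⟩) hbT hazd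
      fun e he f _ => ?_
    -- an edge occurring in `T` forces `N > 0`
    obtain ⟨m, hm, hem⟩ := Finset.mem_biUnion.1 he
    obtain ⟨N, rfl⟩ : ∃ N', N = N' + 1 := Nat.exists_eq_add_one.2 <| by
      have ⟨_, hlen, hN⟩ := hTS hm
      have := List.length_pos_of_mem (List.mem_toFinset.1 hem)
      rw [List.length_append] at this
      omega
    exact ih N (Nat.lt_succ_self N) (ghostA_mul_mul_edgeA_mem_balancedSpan hb e f)
      ((hazd.mul_left (ghostA_mem e)).mul_right (edgeA_mem f))

theorem eq_zero_of_mem_grade_zero (hb : b ∈ grade K s r 0)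
    (hazd : IsAbsZeroDivisor (LeavittPathAlgebra K s r) b) : b = 0 := by
  obtain ⟨T, hTS, hbT⟩ := Submodule.exists_finset_of_mem_span_image hb
  refine eq_zero_of_mem_balancedSpan (T.sup fun m => m.left.length) ?_ hazd
  refine Submodule.span_mono (Set.image_mono ?_) hbT
  intro m hm
  refine ⟨(hTS hm).1, ?_, Finset.le_sup (f := fun m => m.left.length) hm⟩
  have := (hTS hm).2
  simp only [Monomial.degree] at this
  omega

theorem eq_zero_of_mem_grade_neg (k : ℕ) (hb : b ∈ grade K s r (-k))
    (hazd : IsAbsZeroDivisor (LeavittPathAlgebra K s r) b) : b = 0 := by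
  induction k generalizing b with
  | zero => exact eq_zero_of_mem_grade_zero (by simpa using hb) hazd
  | succ k ih =>
    obtain ⟨T, hTS, hbT⟩ := Submodule.exists_finset_of_mem_span_image hb
    have hT : ∀ m ∈ T, m.IsPath s r ∧ m.right ≠ [] := fun m hm => ⟨(hTS hm).1, fun h => by
      have := (hTS hm).2
      simp [Monomial.degree, h] at this
      omega⟩
    rw [← mul_proj_edges_eq_self hT hbT, proj, Finset.mul_sum]
    refine Finset.sum_eq_zero fun f _ => ?_
    have hbf : b * edgeA f ∈ grade K s r (-k) := by
      convert mul_mem_grade hb (edgeA_mem_grade f) using 2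
      push_cast
      ring
    rw [← mul_assoc, ih hbf (hazd.mul_right (edgeA_mem f)), zero_mul]

theorem eq_zero_of_mem_grade_pos (k : ℕ) (hb : b ∈ grade K s r k)
    (hazd : IsAbsZeroDivisor (LeavittPathAlgebra K s r) b) : b = 0 := by
  induction k generalizing b with
  | zero => exact eq_zero_of_mem_grade_zero (by simpa using hb) hazd
  | succ k ih =>
    obtain ⟨T, hTS, hbT⟩ := Submodule.exists_finset_of_mem_span_image hb
    have hT : ∀ m ∈ T, m.IsPath s r ∧ m.left ≠ [] := fun m hm => ⟨(hTS hm).1, fun h => by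
      have := (hTS hm).2
      simp [Monomial.degree, h] at this
      omega⟩
    rw [← proj_edges_mul_eq_self hT hbT, proj, Finset.sum_mul]
    refine Finset.sum_eq_zero fun e _ => ?_
    have heb : ghostA e * b ∈ grade K s r k := by
      convert mul_mem_grade (ghostA_mem_grade e) hb using 2
      push_cast
      ring
    rw [mul_assoc, ih heb (hazd.mul_left (ghostA_mem e)), mul_zero]

theorem eq_zero_of_mem_grade {n : ℤ} (hb : b ∈ grade K s r n)
    (hazd : IsAbsZeroDivisor (LeavittPathAlgebra K s r) b) : b = 0 := by
  obtain ⟨k, rfl | rfl⟩ := Int.eq_nat_or_neg n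
  exacts [eq_zero_of_mem_grade_pos k hb hazd, eq_zero_of_mem_grade_neg k hb hazd]

open AddMonoidAlgebra in
/-- `b_N x_d b_N` is the top coefficient of `grading (b x_d b) = 0`. -/
theorem isAbsZeroDivisor_coeff_grading (hazd : IsAbsZeroDivisor (LeavittPathAlgebra K s r) b)
    {N : ℤ} (hN : ∀ n ∈ (grading K s r b).coeff.support, n ≤ N) :
    IsAbsZeroDivisor (LeavittPathAlgebra K s r) ((grading K s r b).coeff N) := by
  set bN := (grading K s r b).coeff N
  have hhom : ∀ d, ∀ y ∈ grade K s r d, bN * y * bN = 0 := by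
    intro d y hy
    have hbound : ∀ n ∈ (grading K s r b * single d y).coeff.support, n ≤ N + d :=
      le_of_mem_support_mul hN fun n hn =>
        (Finset.mem_singleton.1 (Finsupp.support_single_subset hn)).le
    calc bN * y * bN = (grading K s r b * single d y * grading K s r b).coeff (N + d + N) := by
          rw [coeff_mul_add_of_forall_le hbound hN, coeff_mul_single_add]
      _ = 0 := by
        rw [← grading_of_mem_grade hy, ← map_mul, ← map_mul,
          hazd y (mem_of_mem_monomialSpan hy), map_zero, coeff_zero, Finsupp.zero_apply]
  intro x hx
  rw [eq_sum_coeff_grading x, Finset.mul_sum, Finset.sum_mul]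
  exact Finset.sum_eq_zero fun d _ => hhom d _ (coeff_grading_mem_grade d hx)

theorem eq_zero_of_isAbsZeroDivisor (hbL : b ∈ LeavittPathAlgebra K s r)
    (hazd : IsAbsZeroDivisor (LeavittPathAlgebra K s r) b) : b = 0 := by
  by_contra hne
  have hsupp : (grading K s r b).coeff.support.Nonempty := by
    rw [Finsupp.support_nonempty_iff, Ne, AddMonoidAlgebra.coeff_eq_zero]
    exact fun h => hne (by rw [← counit_grading b, h, map_zero])
  have hN := (grading K s r b).coeff.support.max'_mem hsupp
  exact Finsupp.mem_support_iff.1 hN <| eq_zero_of_mem_grade (coeff_grading_mem_grade _ hbL)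
    (isAbsZeroDivisor_coeff_grading hazd fun n hn => Finset.le_max' _ n hn)

end Nondegenerate

end LPA

theorem leavittPathAlgebra_semiprime_general
    {V Ed : Type} (s r : Ed → V) (K : Type) [Field K] :
    IsSemiprimeRing ↥(LeavittPathAlgebra K s r) :=
  .of_forall_mul_mul_eq_zero fun a ha => Subtype.ext <|
    LPA.eq_zero_of_isAbsZeroDivisor a.2 fun x hx => congrArg Subtype.val (ha ⟨x, hx⟩)

/-- For an arbitrary countable graph `E` and a field `K`, the Leavitt path algebra
`L_K(E)` is semiprime: it has no nonzero two-sided ideal with zero square. -/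
theorem leavittPathAlgebra_semiprime
    {V Ed : Type} [Countable V] [Countable Ed] (s r : Ed → V) (K : Type) [Field K] :
    IsSemiprimeRing ↥(LeavittPathAlgebra K s r) :=
  leavittPathAlgebra_semiprime_general s r K

end
end

section
/- Let R be a semiprime ring and x ∈ R. Then the socle of the local ring of R at x equals the local ring of the socle at x: soc(R_x) = x(soc(R))x (with the operations of R_x). In particular R_x is semiprime, so its socle is defined. -/
set_option synthInstance.maxHeartbeats 1000000
set_option maxHeartbeats 1000000

noncomputable section

section LocalRing
variable {R : Type} [NonUnitalRing R]

/-- The kernel of the additive map `a ↦ xax`. -/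
def localKer (x : R) : AddSubgroup R where
  carrier := {a | x * a * x = 0}
  add_mem' := by
    intro a b ha hb
    simp only [Set.mem_setOf_eq] at *
    rw [mul_add, add_mul, ha, hb, add_zero]
  zero_mem' := by simp
  neg_mem' := by
    intro a ha
    simp only [Set.mem_setOf_eq] at *
    rw [mul_neg, neg_mul, ha, neg_zero]

/-- The local ring `R_x` of `R` at `x`: the abelian group `xRx` (realized as the
quotient of `R` by the kernel of the additive map `a ↦ xax`), equipped with the
product `(xax)·(xbx) := xaxbx`. -/
def LocalAt (x : R) : Type := R ⧸ localKer x

instance (x : R) : AddCommGroup (LocalAt x) :=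
  inferInstanceAs (AddCommGroup (R ⧸ localKer x))

private theorem local_key (x a b c d : R) (h1 : x * a * x = x * c * x)
    (h2 : x * b * x = x * d * x) : x * (a * (x * b)) * x = x * (c * (x * d)) * x := by
  calc x * (a * (x * b)) * x = (x * a * x) * (b * x) := by noncomm_ring
    _ = (x * c * x) * (b * x) := by rw [h1]
    _ = (x * c) * (x * b * x) := by noncomm_ring
    _ = (x * c) * (x * d * x) := by rw [h2]
    _ = x * (c * (x * d)) * x := by noncomm_ring

/-- The product of the local ring at `x`. -/
def localMul (x : R) : LocalAt x → LocalAt x → LocalAt x :=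
  Quotient.map₂ (fun a b => a * (x * b)) (by
    intro a₁ a₂ ha b₁ b₂ hb
    have haM : -a₁ + a₂ ∈ localKer x := QuotientAddGroup.leftRel_apply.mp ha
    have hbM : -b₁ + b₂ ∈ localKer x := QuotientAddGroup.leftRel_apply.mp hb
    refine QuotientAddGroup.leftRel_apply.mpr ?_
    have ha' : x * a₁ * x = x * a₂ * x := by
      have h : x * (-a₁ + a₂) * x = 0 := haM
      rw [mul_add, add_mul, mul_neg, neg_mul] at h
      exact neg_add_eq_zero.mp h
    have hb' : x * b₁ * x = x * b₂ * x := by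
      have h : x * (-b₁ + b₂) * x = 0 := hbM
      rw [mul_add, add_mul, mul_neg, neg_mul] at h
      exact neg_add_eq_zero.mp h
    show x * (-(a₁ * (x * b₁)) + a₂ * (x * b₂)) * x = 0
    rw [mul_add, add_mul, mul_neg, neg_mul, local_key x a₁ b₁ a₂ b₂ ha' hb',
      neg_add_cancel])

instance (x : R) : NonUnitalRing (LocalAt x) :=
  { (inferInstance : AddCommGroup (LocalAt x)) with
    mul := localMul x
    left_distrib := fun a b c => Quotient.inductionOn₃ a b c fun a b c =>
      congrArg (Quot.mk _)
        (show a * (x * (b + c)) = a * (x * b) + a * (x * c) by rw [mul_add, mul_add])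
    right_distrib := fun a b c => Quotient.inductionOn₃ a b c fun a b c =>
      congrArg (Quot.mk _)
        (show (a + b) * (x * c) = a * (x * c) + b * (x * c) from add_mul _ _ _)
    zero_mul := fun a => Quotient.inductionOn a fun a =>
      congrArg (Quot.mk _) (show (0 : R) * (x * a) = 0 from zero_mul _)
    mul_zero := fun a => Quotient.inductionOn a fun a =>
      congrArg (Quot.mk _) (show a * (x * 0) = 0 by rw [mul_zero, mul_zero])
    mul_assoc := fun a b c => Quotient.inductionOn₃ a b c fun a b c =>
      congrArg (Quot.mk _)
        (show (a * (x * b)) * (x * c) = a * (x * (b * (x * c))) by noncomm_ring) }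

/-- The canonical injection of the local ring `R_x` into `R`, sending (the class of)
`a` to `xax`; its image is the subset `xRx` of `R`. -/
def localToRing (x : R) : LocalAt x →+ R :=
  QuotientAddGroup.lift (localKer x)
    (AddMonoidHom.mk' (fun a => x * a * x)
      (fun a b => show x * (a + b) * x = x * a * x + x * b * x by rw [mul_add, add_mul]))
    (fun a ha => ha)

end LocalRing

/-! Call `u` left-minimal if `u ∈ S·(u r u)` whenever `u r u ≠ 0`. In a semiprime ring the
left-minimal elements are `0` and the elements of minimal left ideals, so they span the socle
and are stable under multiplication on either side. Left-minimality is an elementwise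
condition, so it can be moved between `R` and `R_x`, where `[a][r][a] = [axrxa]` and
`[a] ↦ xax` sends this to `xax·r·xax`: an element `a` of a minimal left ideal `L` of `R`
gives a left-minimal `[a]` (as `L = R·x(axrxa)` once that is nonzero), and a left-minimal
`[a]` gives a left-minimal `xax`, whose multiples then lie in `soc R`. -/

section Semiprime

variable {S : Type} [NonUnitalRing S]

theorem mem_principalLeft {a b : S} : b ∈ principalLeft a ↔ ∃ r, r * a = b := Iff.rfl

theorem isLeftIdeal_principalLeft (a : S) : IsLeftIdeal (principalLeft a) :=
  fun b _ hy => principalLeft.mul_mem a b hy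

namespace IsSemiprimeRing

theorem eq_zero_of_mem_of_mul_eq_zero (hS : IsSemiprimeRing S) {A : Set S}
    (hl : ∀ c, ∀ g ∈ A, c * g ∈ A) (hr : ∀ c, ∀ g ∈ A, g * c ∈ A)
    (hA : ∀ g ∈ A, ∀ h ∈ A, g * h = 0) {g : S} (hg : g ∈ A) : g = 0 := by
  have hideal : IsTwoSidedIdealSG (AddSubgroup.closure A) := by
    intro c z hz
    induction hz using AddSubgroup.closure_induction with
    | mem g hg =>
      exact ⟨AddSubgroup.subset_closure (hl c g hg), AddSubgroup.subset_closure (hr c g hg)⟩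
    | zero => rw [mul_zero, zero_mul]; exact ⟨zero_mem _, zero_mem _⟩
    | add z w _ _ hz hw => rw [mul_add, add_mul]; exact ⟨add_mem hz.1 hw.1, add_mem hz.2 hw.2⟩
    | neg z _ hz => rw [mul_neg, neg_mul]; exact ⟨neg_mem hz.1, neg_mem hz.2⟩
  have hsq : ∀ z ∈ AddSubgroup.closure A, ∀ w ∈ AddSubgroup.closure A, z * w = 0 := by
    intro z hz w hw
    induction hz, hw using AddSubgroup.closure_induction₂ with
    | mem g h hg hh => exact hA g hg h hh
    | zero_left => exact zero_mul _
    | zero_right => exact mul_zero _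
    | add_left _ _ _ _ _ _ h₁ h₂ => rw [add_mul, h₁, h₂, add_zero]
    | add_right _ _ _ _ _ _ h₁ h₂ => rw [mul_add, h₁, h₂, add_zero]
    | neg_left _ _ _ _ h => rw [neg_mul, h, neg_zero]
    | neg_right _ _ _ _ h => rw [mul_neg, h, neg_zero]
  have hmem : g ∈ AddSubgroup.closure A := AddSubgroup.subset_closure hg
  rwa [hS _ hideal hsq, AddSubgroup.mem_bot] at hmem

/-- The two-sided ideal `L + LS` generated by `L` also has square zero. -/
theorem eq_zero_of_mem_left_of_mul_eq_zero (hS : IsSemiprimeRing S) {L : Set S}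
    (hl : ∀ c, ∀ g ∈ L, c * g ∈ L) (hL : ∀ g ∈ L, ∀ h ∈ L, g * h = 0) {g : S} (hg : g ∈ L) :
    g = 0 := by
  refine hS.eq_zero_of_mem_of_mul_eq_zero (A := {y | y ∈ L ∨ ∃ l ∈ L, ∃ s, l * s = y})
    ?_ ?_ ?_ (Or.inl hg)
  · rintro c _ (hy | ⟨l, hl', s, rfl⟩)
    · exact Or.inl (hl c _ hy)
    · exact Or.inr ⟨c * l, hl c l hl', s, mul_assoc _ _ _⟩
  · rintro c _ (hy | ⟨l, hl', s, rfl⟩)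
    · exact Or.inr ⟨_, hy, c, rfl⟩
    · exact Or.inr ⟨l, hl', s * c, (mul_assoc _ _ _).symm⟩
  · rintro _ (hy | ⟨l, hl', s, rfl⟩) _ (hz | ⟨l', hl'', s', rfl⟩)
    · exact hL _ hy _ hz
    · rw [← mul_assoc, hL _ hy _ hl'', zero_mul]
    · rw [mul_assoc, hL _ hl' _ (hl s _ hz)]
    · rw [mul_assoc, ← mul_assoc s, ← mul_assoc l, hL _ hl' _ (hl s _ hl''), zero_mul]

theorem eq_zero_of_forall_mul_mul_eq_zero (hS : IsSemiprimeRing S) {a : S}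
    (h : ∀ r, a * r * a = 0) : a = 0 := by
  have hSa : ∀ r, r * a = 0 := fun r =>
    hS.eq_zero_of_mem_left_of_mul_eq_zero (L := principalLeft a)
      (fun c _ hg => principalLeft.mul_mem a c hg)
      (by rintro _ ⟨r, rfl⟩ _ ⟨r', rfl⟩; rw [mul_assoc, ← mul_assoc a, h, mul_zero])
      ⟨r, rfl⟩
  refine hS.eq_zero_of_mem_left_of_mul_eq_zero (L := {0, a}) ?_ ?_ (Or.inr rfl)
  · rintro c _ (rfl | rfl)
    · exact Or.inl (mul_zero c)
    · exact Or.inl (hSa c)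
  · rintro _ (rfl | rfl) _ (rfl | rfl) <;> simp only [mul_zero, hSa]

theorem exists_mul_mul_ne_zero (hS : IsSemiprimeRing S) {a : S} (ha : a ≠ 0) :
    ∃ r, a * r * a ≠ 0 := by
  by_contra! h
  exact ha (hS.eq_zero_of_forall_mul_mul_eq_zero h)

theorem principalLeft_eq_of_mem (hS : IsSemiprimeRing S) {L : AddSubgroup S}
    (hL : IsMinimalLeftIdeal L) {c : S} (hc : c ∈ L) (hc0 : c ≠ 0) : principalLeft c = L := by
  have hle : principalLeft c ≤ L := by rintro _ ⟨r, rfl⟩; exact hL.1 r c hc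
  refine hle.eq_of_not_lt fun hlt => hc0 (hS.eq_zero_of_forall_mul_mul_eq_zero fun r => ?_)
  have hrc : r * c ∈ principalLeft c := ⟨r, rfl⟩
  rw [hL.2.2 _ (isLeftIdeal_principalLeft c) hlt, AddSubgroup.mem_bot] at hrc
  rw [mul_assoc, hrc, mul_zero]

end IsSemiprimeRing

def IsLeftMinimalElement (u : S) : Prop :=
  ∀ r : S, u * r * u ≠ 0 → ∃ t, t * (u * r * u) = u

theorem IsMinimalLeftIdeal.isLeftMinimalElement (hS : IsSemiprimeRing S) {L : AddSubgroup S}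
    (hL : IsMinimalLeftIdeal L) {u : S} (hu : u ∈ L) : IsLeftMinimalElement u := fun r hr =>
  mem_principalLeft.1 (by rw [hS.principalLeft_eq_of_mem hL (hL.1 (u * r) u hu) hr]; exact hu)

namespace IsLeftMinimalElement

variable {u : S}

theorem mul_right (hu : IsLeftMinimalElement u) (w : S) : IsLeftMinimalElement (u * w) := by
  intro s hs
  have hne : u * (w * s) * u ≠ 0 := fun h => hs <| by
    calc u * w * s * (u * w) = u * (w * s) * u * w := by simp only [mul_assoc]
      _ = 0 := by rw [h, zero_mul]
  obtain ⟨p, hp⟩ := hu _ hne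
  refine ⟨p, ?_⟩
  calc p * (u * w * s * (u * w)) = p * (u * (w * s) * u) * w := by simp only [mul_assoc]
    _ = u * w := by rw [hp]

theorem isMinimalLeftIdeal_principalLeft (hu : IsLeftMinimalElement u) (hS : IsSemiprimeRing S)
    (hu0 : u ≠ 0) : IsMinimalLeftIdeal (principalLeft u) ∧ u ∈ principalLeft u := by
  have hself : u ∈ principalLeft u := by
    obtain ⟨r, hr⟩ := hS.exists_mul_mul_ne_zero hu0
    obtain ⟨t, ht⟩ := hu r hr
    exact mem_principalLeft.2 ⟨t * (u * r), by rw [mul_assoc]; exact ht⟩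
  refine ⟨⟨isLeftIdeal_principalLeft u, fun h => hu0 ?_, fun J hJ hlt => ?_⟩, hself⟩
  · rwa [h, AddSubgroup.mem_bot] at hself
  rw [AddSubgroup.eq_bot_iff_forall]
  intro z hzJ
  by_contra hz0
  obtain ⟨p, rfl⟩ := mem_principalLeft.1 (hlt.le hzJ)
  obtain ⟨s, hs⟩ := hS.exists_mul_mul_ne_zero hz0
  have hne : u * (s * p) * u ≠ 0 := fun h => hs <| by
    calc p * u * s * (p * u) = p * (u * (s * p) * u) := by simp only [mul_assoc]
      _ = 0 := by rw [h, mul_zero]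
  obtain ⟨t, ht⟩ := hu _ hne
  have huJ : u ∈ J := by
    rw [← ht, show t * (u * (s * p) * u) = t * u * s * (p * u) by simp only [mul_assoc]]
    exact hJ _ _ hzJ
  exact hlt.not_ge fun _ ⟨q, hq⟩ => hq ▸ hJ q u huJ

theorem mul_left (hu : IsLeftMinimalElement u) (hS : IsSemiprimeRing S) (t : S) :
    IsLeftMinimalElement (t * u) := by
  by_cases hu0 : u = 0
  · subst hu0
    intro r hr
    simp at hr
  obtain ⟨hmin, hself⟩ := hu.isMinimalLeftIdeal_principalLeft hS hu0
  exact hmin.isLeftMinimalElement hS (principalLeft.mul_mem u t hself)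

theorem mem_rsocle (hu : IsLeftMinimalElement u) (hS : IsSemiprimeRing S) : u ∈ rsocle S := by
  by_cases hu0 : u = 0
  · rw [hu0]; exact zero_mem _
  obtain ⟨hmin, hself⟩ := hu.isMinimalLeftIdeal_principalLeft hS hu0
  exact le_sSup (s := {I : AddSubgroup S | IsMinimalLeftIdeal I}) hmin hself

end IsLeftMinimalElement

theorem rsocle_le_iff {N : AddSubgroup S} :
    rsocle S ≤ N ↔ ∀ L : AddSubgroup S, IsMinimalLeftIdeal L → L ≤ N :=
  sSup_le_iff

end Semiprime

namespace LocalAt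

variable {R : Type} [NonUnitalRing R] (x : R)

/-- The class `[a] ∈ R_x` of `a ∈ R`, corresponding to `xax ∈ xRx`. -/
def mk : R →+ LocalAt x := QuotientAddGroup.mk' (localKer x)

theorem mk_mul (a b : R) : mk x a * mk x b = mk x (a * (x * b)) := rfl

theorem mk_eq_zero_iff {a : R} : mk x a = 0 ↔ x * a * x = 0 := QuotientAddGroup.eq_zero_iff a

theorem localToRing_mk (a : R) : localToRing x (mk x a) = x * a * x := rfl

theorem mk_surjective : Function.Surjective (mk x) := QuotientAddGroup.mk'_surjective _

theorem isSemiprimeRing (hR : IsSemiprimeRing R) : IsSemiprimeRing (LocalAt x) := by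
  intro I hI hsq
  rw [AddSubgroup.eq_bot_iff_forall]
  intro u hu
  obtain ⟨a, rfl⟩ := mk_surjective x u
  refine (mk_eq_zero_iff x).2 (hR.eq_zero_of_forall_mul_mul_eq_zero fun r => ?_)
  have h := hsq _ hu _ (hI (mk x r) _ hu).1
  rw [mk_mul, mk_mul, mk_eq_zero_iff] at h
  simpa only [mul_assoc] using h

theorem isLeftMinimalElement_mk (hR : IsSemiprimeRing R) {L : AddSubgroup R}
    (hL : IsMinimalLeftIdeal L) {a : R} (ha : a ∈ L) : IsLeftMinimalElement (mk x a) := by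
  intro ρ hρ
  obtain ⟨r, rfl⟩ := mk_surjective x ρ
  rw [mk_mul, mk_mul] at hρ ⊢
  have hmem : x * (a * (x * r) * (x * a)) ∈ L :=
    hL.1 x _ (by rw [← mul_assoc]; exact hL.1 _ a ha)
  have hne : x * (a * (x * r) * (x * a)) ≠ 0 := fun h =>
    hρ ((mk_eq_zero_iff x).2 (by rw [h, zero_mul]))
  obtain ⟨t, ht⟩ := mem_principalLeft.1 (hR.principalLeft_eq_of_mem hL hmem hne ▸ ha)
  exact ⟨mk x t, by rw [mk_mul, ht]⟩

theorem isLeftMinimalElement_of_mk {a : R} (ha : IsLeftMinimalElement (mk x a)) :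
    IsLeftMinimalElement (x * a * x) := by
  intro r hr
  have hne : mk x (a * (x * r) * (x * a)) ≠ 0 := fun h =>
    hr (by simpa only [mul_assoc] using (mk_eq_zero_iff x).1 h)
  obtain ⟨τ, hτ⟩ := ha (mk x r) (by rwa [mk_mul, mk_mul])
  obtain ⟨t, rfl⟩ := mk_surjective x τ
  rw [mk_mul, mk_mul, mk_mul] at hτ
  refine ⟨x * t, Eq.trans ?_ (congrArg (localToRing x) hτ)⟩
  rw [localToRing_mk]
  simp only [mul_assoc]

theorem exists_mem_rsocle_mk_eq (hR : IsSemiprimeRing R) {M : AddSubgroup (LocalAt x)}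
    (hM : IsMinimalLeftIdeal M) {u : LocalAt x} (hu : u ∈ M) :
    ∃ c ∈ rsocle R, mk x c = u := by
  have hRx := isSemiprimeRing x hR
  by_cases hu0 : u = 0
  · exact ⟨0, zero_mem _, by rw [map_zero, hu0]⟩
  obtain ⟨a, rfl⟩ := mk_surjective x u
  have ha := hM.isLeftMinimalElement hRx hu
  obtain ⟨ρ, hρ⟩ := hRx.exists_mul_mul_ne_zero hu0
  obtain ⟨τ, hτ⟩ := ha ρ hρ
  obtain ⟨r, rfl⟩ := mk_surjective x ρ
  obtain ⟨t, rfl⟩ := mk_surjective x τ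
  refine ⟨t * (x * a * x * (r * (x * a))),
    (((isLeftMinimalElement_of_mk x ha).mul_right _).mul_left hR t).mem_rsocle hR, ?_⟩
  rw [← hτ, mk_mul, mk_mul, mk_mul]
  congr 1
  simp only [mul_assoc]

theorem rsocle_eq_map (hR : IsSemiprimeRing R) :
    rsocle (LocalAt x) = (rsocle R).map (mk x) := by
  refine le_antisymm (rsocle_le_iff.2 fun M hM u hu => ?_) ?_
  · obtain ⟨c, hc, rfl⟩ := exists_mem_rsocle_mk_eq x hR hM hu
    exact ⟨c, hc, rfl⟩
  · refine AddSubgroup.map_le_iff_le_comap.2 (rsocle_le_iff.2 fun L hL a ha => ?_)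
    exact (isLeftMinimalElement_mk x hR hL ha).mem_rsocle (isSemiprimeRing x hR)

end LocalAt

/-- For a semiprime ring `R` and `x ∈ R`, the local ring `R_x` of `R` at `x` is
semiprime, and its socle equals `x · soc(R) · x`: under the canonical injection
`R_x → R`, the image of `soc(R_x)` is `{xax : a ∈ soc(R)}`. -/
theorem socle_localAt
    {R : Type} [NonUnitalRing R] (hR : IsSemiprimeRing R) (x : R) :
    IsSemiprimeRing (LocalAt x) ∧
    (localToRing x) '' ((rsocle (LocalAt x) : AddSubgroup (LocalAt x)) : Set (LocalAt x)) =
      {y : R | ∃ a ∈ rsocle R, y = x * a * x} := by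
  refine ⟨LocalAt.isSemiprimeRing x hR, ?_⟩
  rw [LocalAt.rsocle_eq_map x hR, AddSubgroup.coe_map, ← Set.image_comp]
  exact Set.ext fun y =>
    ⟨fun ⟨a, ha, hy⟩ => ⟨a, ha, hy.symm⟩, fun ⟨a, ha, hy⟩ => ⟨a, ha, hy.symm⟩⟩

end
end
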